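/- arXiv:1705.07610 — 3 statements merged into one kernel-verified Lean document; each statement's English description precedes it below -/
import Mathlib

section
/- Let k be a field, Ψ a finite-dimensional k-vector space, and for i = 1,…,n let u_i : Ψ → Φ_i and v_i : Φ_i → Ψ be linear maps with T_i := 1 - v_i u_i. Define the block n×n matrix S_β with (i,j) block equal to the identity on Φ_i if i = j, equal to u_i v_j : Φ_j → Φ_i if i < j, and 0 if i > j. Then S_β is invertible, and its inverse has (i,j) block equal to the identity if i = j, equal to -u_i T_{i+1} T_{i+2} ⋯ T_{j-1} v_j if i < j, and 0 if i > j. -/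
open scoped BigOperators

variable {k : Type*} [Field k] {n : ℕ} {Ψ : Type*}
  [AddCommGroup Ψ] [Module k Ψ] [FiniteDimensional k Ψ]
  {Φ : Fin n → Type*} [∀ i, AddCommGroup (Φ i)] [∀ i, Module k (Φ i)]
  [∀ i, FiniteDimensional k (Φ i)]

/-- The ordered product (composition) of the endomorphisms `T l` for `l` running through the
finite set `s` in increasing order: for `s = {a₁ < a₂ < ⋯ < a_r}` this is `T a₁ ∘ T a₂ ∘ ⋯ ∘ T a_r`
(the identity if `s` is empty). -/
def orderedProd (T : Fin n → Module.End k Ψ) (s : Finset (Fin n)) : Module.End k Ψ :=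
  ((s.sort (· ≤ ·)).map T).prod

/-- The local monodromies `T_i := 1 - v_i u_i` of the quiver `(Ψ, Φ_i, u_i, v_i)`. -/
def quiverT (u : ∀ i, Ψ →ₗ[k] Φ i) (v : ∀ i, Φ i →ₗ[k] Ψ) (i : Fin n) : Module.End k Ψ :=
  1 - v i ∘ₗ u i

/-- The Stokes multiplier `S_β`: the block upper-unitriangular endomorphism of `⊕ᵢ Φᵢ` with
identity diagonal blocks and `(i,j)` block `u_i ∘ v_j` for `i < j`. -/
def Sbeta (u : ∀ i, Ψ →ₗ[k] Φ i) (v : ∀ i, Φ i →ₗ[k] Ψ) :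
    Module.End k (∀ i, Φ i) :=
  LinearMap.pi fun i =>
    (LinearMap.proj i : (∀ i, Φ i) →ₗ[k] Φ i) +
      ∑ j, if i < j then (u i ∘ₗ v j) ∘ₗ (LinearMap.proj j) else 0

/-- The block upper-unitriangular endomorphism of `⊕ᵢ Φᵢ` with identity diagonal blocks and
`(i,j)` block `-u_i T_{i+1} T_{i+2} ⋯ T_{j-1} v_j` for `i < j`. -/
def SbetaInv (u : ∀ i, Ψ →ₗ[k] Φ i) (v : ∀ i, Φ i →ₗ[k] Ψ) :
    Module.End k (∀ i, Φ i) :=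
  LinearMap.pi fun i =>
    (LinearMap.proj i : (∀ i, Φ i) →ₗ[k] Φ i) -
      ∑ j, if i < j then
        (u i ∘ₗ (orderedProd (quiverT u v) (Finset.Ioo i j) : Ψ →ₗ[k] Ψ) ∘ₗ v j) ∘ₗ
          (LinearMap.proj j : (∀ l, Φ l) →ₗ[k] Φ j)
      else 0

/-!
Write `P i j := T_{i+1} ⋯ T_{j-1}`. Since `v_l u_l = 1 - T_l`, the `(i,j)` block of
`S_β S_β⁻¹` for `i < j` is `u_i (1 - P i j - ∑_{i<l<j} (1 - T_l) P l j) v_j`, and the bracket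
vanishes because `(1 - T_l) P l j = P l j - T_l P l j` makes the sum telescope. A right inverse
of an endomorphism of a finite-dimensional space is a two-sided inverse.
-/

open Finset

section

omit [FiniteDimensional k Ψ] [∀ i, FiniteDimensional k (Φ i)]

theorem orderedProd_insert_of_lt (T : Fin n → Module.End k Ψ) {a : Fin n} {s : Finset (Fin n)}
    (h : ∀ b ∈ s, a < b) : orderedProd T (insert a s) = T a * orderedProd T s := by
  rw [orderedProd, sort_insert _ (fun b hb => (h b hb).le) fun ha => (h a ha).false,
    List.map_cons, List.prod_cons, orderedProd]

theorem orderedProd_add_sum_sub_mul_orderedProd (T : Fin n → Module.End k Ψ)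
    (s : Finset (Fin n)) :
    orderedProd T s + ∑ l ∈ s, (1 - T l) * orderedProd T {m ∈ s | l < m} = 1 := by
  induction s using Finset.induction_on_min with
  | empty => simp [orderedProd]
  | insert a s has ih =>
    have hfilter_a : {m ∈ insert a s | a < m} = s := by
      rw [filter_insert, if_neg (lt_irrefl a), filter_true_of_mem has]
    have hfilter : ∀ l ∈ s, {m ∈ insert a s | l < m} = {m ∈ s | l < m} := fun l hl => by
      rw [filter_insert, if_neg (has l hl).not_gt]
    rw [sum_insert fun ha => (has a ha).false, hfilter_a,
      sum_congr rfl fun l hl => by rw [hfilter l hl], orderedProd_insert_of_lt T has]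
    linear_combination (norm := noncomm_ring) ih

theorem orderedProd_Ioo_add_sum_sub_mul_orderedProd_Ioo (T : Fin n → Module.End k Ψ)
    (i j : Fin n) :
    orderedProd T (Ioo i j) + ∑ l ∈ Ioo i j, (1 - T l) * orderedProd T (Ioo l j) = 1 := by
  have hfilter : ∀ l ∈ Ioo i j, {m ∈ Ioo i j | l < m} = Ioo l j := fun l hl => by
    ext m
    simp only [mem_filter, mem_Ioo] at hl ⊢
    exact ⟨fun h => ⟨h.2, h.1.2⟩, fun h => ⟨⟨hl.1.trans h.1, h.2⟩, h.1⟩⟩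
  rw [sum_congr rfl fun l hl => by rw [← hfilter l hl]]
  exact orderedProd_add_sum_sub_mul_orderedProd T (Ioo i j)

theorem sum_orderedProd_Ioo_add_sum_sub_apply (T : Fin n → Module.End k Ψ) (y : Fin n → Ψ)
    (i : Fin n) :
    ∑ j ∈ Ioi i, orderedProd T (Ioo i j) (y j) +
      ∑ l ∈ Ioi i, (1 - T l) (∑ j ∈ Ioi l, orderedProd T (Ioo l j) (y j)) = ∑ j ∈ Ioi i, y j := by
  have hswap : ∑ l ∈ Ioi i, ∑ j ∈ Ioi l, (1 - T l) (orderedProd T (Ioo l j) (y j)) =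
      ∑ j ∈ Ioi i, ∑ l ∈ Ioo i j, (1 - T l) (orderedProd T (Ioo l j) (y j)) :=
    sum_comm' fun l j => by
      simp only [mem_Ioi, mem_Ioo]
      exact ⟨fun h => ⟨h, h.1.trans h.2⟩, fun h => h.1⟩
  simp_rw [map_sum]
  rw [hswap, ← sum_add_distrib]
  refine sum_congr rfl fun j _ => ?_
  simpa using congr($(orderedProd_Ioo_add_sum_sub_mul_orderedProd_Ioo T i j) (y j))

variable (u : ∀ i, Ψ →ₗ[k] Φ i) (v : ∀ i, Φ i →ₗ[k] Ψ)

theorem Sbeta_apply (x : ∀ i, Φ i) (i : Fin n) :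
    Sbeta u v x i = x i + u i (∑ j ∈ Ioi i, v j (x j)) := by
  simp [Sbeta, sum_ite, filter_lt_eq_Ioi]

theorem SbetaInv_apply (x : ∀ i, Φ i) (i : Fin n) :
    SbetaInv u v x i =
      x i - u i (∑ j ∈ Ioi i, orderedProd (quiverT u v) (Ioo i j) (v j (x j))) := by
  simp [SbetaInv, sum_ite, filter_lt_eq_Ioi]

theorem Sbeta_mul_SbetaInv : Sbeta u v * SbetaInv u v = 1 := by
  refine LinearMap.ext fun x => funext fun i => ?_
  have key := sum_orderedProd_Ioo_add_sum_sub_apply (quiverT u v) (fun j => v j (x j)) i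
  simp only [quiverT, sub_sub_cancel, LinearMap.comp_apply] at key
  rw [Module.End.mul_apply, Sbeta_apply, Module.End.one_apply]
  simp only [SbetaInv_apply, map_sub, sum_sub_distrib, ← key, map_add]
  abel

end

/-- The block matrix `S_β`, with identity diagonal blocks, `(i,j)` block `u_i v_j` for `i < j`
and `0` below the diagonal, is invertible, and its inverse is the block upper-unitriangular
matrix whose `(i,j)` block for `i < j` is `-u_i T_{i+1} T_{i+2} ⋯ T_{j-1} v_j`,
where `T_l = 1 - v_l u_l`. -/
theorem stmt_1 (u : ∀ i, Ψ →ₗ[k] Φ i) (v : ∀ i, Φ i →ₗ[k] Ψ) :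
    Sbeta u v * SbetaInv u v = 1 ∧ SbetaInv u v * Sbeta u v = 1 :=
  ⟨Sbeta_mul_SbetaInv u v, mul_eq_one_comm.mp (Sbeta_mul_SbetaInv u v)⟩
end

section
/- Localized-case Stokes matrices: let T_1, …, T_n be invertible endomorphisms of a finite-dimensional k-vector space Ψ, and set u_i := id_Ψ, v_i := 1 - T_i. Then the Stokes matrices of the theorem become S_β with (i,j) entry 1 for i = j, 1 - T_j for i < j, 0 for i > j, and S_{-β} with (i,j) entry T_i for i = j, T_j - 1 for i > j, 0 for i < j; and one has S_β^{-1} S_{-β} = 1 - U_Σ V_Σ where (U_Σ V_Σ)_{ij} = T_{i+1} T_{i+2} ⋯ T_n (1 - T_j). -/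
open scoped BigOperators

variable {k : Type*} [Field k] {n : ℕ} {Ψ : Type*}
  [AddCommGroup Ψ] [Module k Ψ] [FiniteDimensional k Ψ]

/-!
`S_β` is unipotent upper triangular, hence a unit, and `U_Σ V_Σ` is the rank-one matrix
`P (1 - T)ᵀ` with `P i = T_{i+1} ⋯ T_n`. Row `i` of `S_β P` is
`P i + ∑_{l > i} (1 - T l) P l`, which telescopes to `1` because `(1 - T l) P l = P l - P (l - 1)`.
Hence `S_β U_Σ V_Σ` has `(i, j)` entry `1 - T j`, and `S_β (1 - U_Σ V_Σ) = S_{-β}` entry by entry.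
-/

namespace Matrix

variable {R : Type*} [Ring R]

theorem pow_apply_eq_zero_of_forall_not_lt {M : Matrix (Fin n) (Fin n) R}
    (hM : ∀ i j, ¬ i < j → M i j = 0) (m : ℕ) (i j : Fin n) (hij : (j : ℕ) < i + m) :
    (M ^ m) i j = 0 := by
  induction m generalizing i with
  | zero => exact one_apply_ne (by rintro rfl; omega)
  | succ m ih =>
    rw [pow_succ', mul_apply]
    refine Finset.sum_eq_zero fun l _ => ?_
    by_cases hil : i < l
    · rw [ih l (by omega), mul_zero]
    · rw [hM i l hil, zero_mul]

theorem isNilpotent_of_forall_not_lt {M : Matrix (Fin n) (Fin n) R}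
    (hM : ∀ i j, ¬ i < j → M i j = 0) : IsNilpotent M :=
  ⟨n, ext fun i j => pow_apply_eq_zero_of_forall_not_lt hM n i j (by omega)⟩

theorem isUnit_of_upper_unitriangular {M : Matrix (Fin n) (Fin n) R}
    (hdiag : ∀ i, M i i = 1) (hlower : ∀ i j, j < i → M i j = 0) : IsUnit M := by
  have hN : IsNilpotent (M - 1) := isNilpotent_of_forall_not_lt fun i j hij => by
    rcases (not_lt.mp hij).eq_or_lt with rfl | hji
    · simp [hdiag]
    · simp [hlower i j hji, one_apply_ne hji.ne']
  simpa using hN.isUnit_one_add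

end Matrix

section OrderedProd

variable {K V : Type*} [Field K] [AddCommGroup V] [Module K V] (T : Fin n → Module.End K V)

theorem orderedProd_insert_of_forall_lt {a : Fin n} {s : Finset (Fin n)} (ha : ∀ b ∈ s, a < b) :
    orderedProd T (insert a s) = T a * orderedProd T s := by
  have ha' : a ∉ s := fun h => lt_irrefl a (ha a h)
  rw [orderedProd, Finset.sort_insert _ (fun b hb => (ha b hb).le) ha']
  simp [orderedProd]

theorem orderedProd_add_sum_one_sub_mul_orderedProd_inter_Ioi (s : Finset (Fin n)) :
    orderedProd T s + ∑ l ∈ s, (1 - T l) * orderedProd T (s ∩ Finset.Ioi l) = 1 := by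
  induction s using Finset.induction_on_min with
  | empty => simp [orderedProd]
  | insert a s ha ih =>
    have ha' : a ∉ s := fun h => lt_irrefl a (ha a h)
    have hcap_a : insert a s ∩ Finset.Ioi a = s := by
      rw [Finset.insert_inter_of_notMem (by simp), Finset.inter_eq_left]
      exact fun b hb => Finset.mem_Ioi.mpr (ha b hb)
    have hcap : ∀ l ∈ s, insert a s ∩ Finset.Ioi l = s ∩ Finset.Ioi l := fun l hl =>
      Finset.insert_inter_of_notMem (by simpa using (ha l hl).le)
    rw [Finset.sum_insert ha', hcap_a, Finset.sum_congr rfl fun l hl => by rw [hcap l hl],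
      orderedProd_insert_of_forall_lt T ha, sub_mul, one_mul]
    convert ih using 1
    abel

theorem orderedProd_Ioi_add_sum (i : Fin n) :
    orderedProd T (Finset.Ioi i) +
      ∑ l ∈ Finset.Ioi i, (1 - T l) * orderedProd T (Finset.Ioi l) = 1 := by
  convert orderedProd_add_sum_one_sub_mul_orderedProd_inter_Ioi T (Finset.Ioi i) using 3 with l hl
  rw [Finset.inter_eq_right.mpr (Finset.Ioi_subset_Ioi (Finset.mem_Ioi.mp hl).le)]

theorem mulVec_orderedProd_Ioi :
    Matrix.mulVec (Matrix.of fun i j => if i = j then 1 else if i < j then 1 - T j else 0)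
      (fun i => orderedProd T (Finset.Ioi i)) = 1 := by
  ext1 i
  have hentry : ∀ l, (if i = l then 1 else if i < l then 1 - T l else 0) *
      orderedProd T (Finset.Ioi l) = (if i = l then orderedProd T (Finset.Ioi l) else 0) +
        if i < l then (1 - T l) * orderedProd T (Finset.Ioi l) else 0 := fun l => by
    split_ifs <;> simp_all
  simp only [Matrix.mulVec, dotProduct, Matrix.of_apply]
  rw [Finset.sum_congr rfl fun l _ => hentry l, Finset.sum_add_distrib, Finset.sum_ite_eq, ← Finset.sum_filter, Finset.filter_lt_eq_Ioi, if_pos (Finset.mem_univ i)]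
  exact orderedProd_Ioi_add_sum T i

end OrderedProd

theorem stmt_7_general (T : Fin n → Module.End k Ψ)
    (Sβ Sm UV : Matrix (Fin n) (Fin n) (Module.End k Ψ))
    (hSβ : Sβ = Matrix.of fun i j => if i = j then 1 else if i < j then 1 - T j else 0)
    (hSm : Sm = Matrix.of fun i j => if i = j then T i else if j < i then T j - 1 else 0)
    (hUV : UV = Matrix.of fun i j => orderedProd T (Finset.Ioi i) * (1 - T j)) :
    IsUnit Sβ ∧ Ring.inverse Sβ * Sm = 1 - UV := by
  have hunit : IsUnit Sβ := Matrix.isUnit_of_upper_unitriangular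
    (fun i => by simp [hSβ]) (fun i j hji => by simp [hSβ, hji.ne', lt_asymm hji])
  have hUV_eq : UV = Matrix.vecMulVec (fun i => orderedProd T (Finset.Ioi i)) (fun j => 1 - T j) :=
    hUV
  have hkey : Sβ * (1 - UV) = Sm := by
    rw [mul_sub, mul_one, hUV_eq, Matrix.mul_vecMulVec, hSβ, mulVec_orderedProd_Ioi, hSm]
    refine Matrix.ext fun i j => ?_
    simp only [Matrix.sub_apply, Matrix.of_apply, Matrix.vecMulVec_apply, Pi.one_apply, one_mul]
    rcases lt_trichotomy i j with hij | rfl | hji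
    · simp [hij.ne, hij, lt_asymm hij]
    · simp
    · simp [hji.ne', hji, lt_asymm hji]
  refine ⟨hunit, ?_⟩
  rw [← hkey, ← mul_assoc, Ring.inverse_mul_cancel _ hunit, one_mul]

/-- Localized-case Stokes matrices: for invertible `T_1, …, T_n ∈ End(Ψ)` (and `u_i = id`,
`v_i = 1 - T_i`), the matrix `S_β` with `(i,j)` entry `1` for `i = j`, `1 - T_j` for `i < j`
and `0` for `i > j`, and the matrix `S_{-β}` with `(i,j)` entry `T_i` for `i = j`,
`T_j - 1` for `i > j` and `0` for `i < j`, satisfy: `S_β` is invertible and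
`S_β⁻¹ S_{-β} = 1 - U_Σ V_Σ`, where `(U_Σ V_Σ)_{ij} = T_{i+1} T_{i+2} ⋯ T_n (1 - T_j)`. -/
theorem stmt_7 (T : Fin n → Module.End k Ψ) (hT : ∀ i, IsUnit (T i))
    (Sβ Sm UV : Matrix (Fin n) (Fin n) (Module.End k Ψ))
    (hSβ : Sβ = Matrix.of fun i j => if i = j then 1 else if i < j then 1 - T j else 0)
    (hSm : Sm = Matrix.of fun i j => if i = j then T i else if j < i then T j - 1 else 0)
    (hUV : UV = Matrix.of fun i j => orderedProd T (Finset.Ioi i) * (1 - T j)) :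
    IsUnit Sβ ∧ Ring.inverse Sβ * Sm = 1 - UV :=
  stmt_7_general T Sβ Sm UV hSβ hSm hUV
end

section
/- Quiver of the smash functor: let F be a perverse sheaf on ℂ with singularities in a finite set Σ = {c_1 <_β ⋯ <_β c_n} and quiver (Ψ, Φ_c, u_c, v_c)_{c ∈ Σ}. Then smash(F) is a perverse sheaf with unique possible singularity at 0, and its quiver is (Ψ, ⊕_i Φ_{c_i}, U_Σ, V_Σ), where U_i = u_{c_i} T_{c_{i+1}} ⋯ T_{c_n}, V_i = v_{c_i}, and T_c = 1 - v_c u_c. In the linear algebra model: given maps u_i : Ψ → Φ_i, v_i : Φ_i → Ψ with all 1 - v_i u_i invertible, setting U = ᵗ(U_1,…,U_n) : Ψ → ⊕Φ_i and V = (v_1,…,v_n) : ⊕Φ_i → Ψ with U_i = u_i T_{i+1}⋯T_n, the endomorphism 1 - V U of Ψ equals T_1 T_2 ⋯ T_n, and in particular is invertible. -/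
open scoped BigOperators

variable {k : Type*} [Field k] {n : ℕ} {Ψ : Type*}
  [AddCommGroup Ψ] [Module k Ψ] [FiniteDimensional k Ψ]
  {Φ : Fin n → Type*} [∀ i, AddCommGroup (Φ i)] [∀ i, Module k (Φ i)]
  [∀ i, FiniteDimensional k (Φ i)]

lemma orderedProd_key (T : Fin n → Module.End k Ψ) (s : Finset (Fin n)) :
    orderedProd T s = 1 - ∑ i ∈ s, (1 - T i) * orderedProd T (s ∩ Finset.Ioi i) := by
  induction s using Finset.strongInduction with
  | _ s ih =>
    rcases s.eq_empty_or_nonempty with rfl | hne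
    · simp [orderedProd]
    · set m := s.min' hne with hm
      have hmem : m ∈ s := s.min'_mem hne
      have hts : s.erase m ⊂ s := Finset.erase_ssubset hmem
      have hlt : ∀ b ∈ s.erase m, m < b := by
        intro b hb
        exact lt_of_le_of_ne (s.min'_le b (Finset.mem_of_mem_erase hb))
          (Ne.symm (Finset.ne_of_mem_erase hb))
      have hins : s = insert m (s.erase m) := (Finset.insert_erase hmem).symm
      have hsort : orderedProd T s = T m * orderedProd T (s.erase m) := by
        rw [orderedProd, orderedProd]
        conv_lhs => rw [hins]
        rw [Finset.sort_insert (· ≤ ·) (fun b hb => (hlt b hb).le)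
          (Finset.notMem_erase m s)]
        simp
      have hIm : s ∩ Finset.Ioi m = s.erase m := by
        ext x
        simp only [Finset.mem_inter, Finset.mem_Ioi, Finset.mem_erase]
        constructor
        · rintro ⟨hx, h⟩; exact ⟨h.ne', hx⟩
        · rintro ⟨hne', hx⟩
          exact ⟨hx, lt_of_le_of_ne (s.min'_le x hx) (Ne.symm hne')⟩
      have hIi : ∀ i ∈ s.erase m, s ∩ Finset.Ioi i = s.erase m ∩ Finset.Ioi i := by
        intro i hi
        ext x
        simp only [Finset.mem_inter, Finset.mem_Ioi, Finset.mem_erase]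
        constructor
        · rintro ⟨hx, h⟩
          refine ⟨⟨?_, hx⟩, h⟩
          rintro rfl
          exact absurd h (not_lt.2 (s.min'_le i (Finset.mem_of_mem_erase hi)))
        · rintro ⟨⟨_, hx⟩, h⟩; exact ⟨hx, h⟩
      rw [hsort, ih _ hts]
      rw [← Finset.add_sum_erase s _ hmem, hIm]
      have : ∑ i ∈ s.erase m, (1 - T i) * orderedProd T (s ∩ Finset.Ioi i)
          = ∑ i ∈ s.erase m, (1 - T i) * orderedProd T (s.erase m ∩ Finset.Ioi i) :=
        Finset.sum_congr rfl fun i hi => by rw [hIi i hi]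
      rw [this]
      set P := orderedProd T (s.erase m)
      set S := ∑ i ∈ s.erase m, (1 - T i) * orderedProd T (s.erase m ∩ Finset.Ioi i)
      have hP : P = 1 - S := ih _ hts
      rw [hP]; noncomm_ring

/-- Quiver of the smash functor (linear algebra content): given quiver data
`u_i : Ψ → Φ_i`, `v_i : Φ_i → Ψ` with each `T_i := 1 - v_i u_i` invertible, putting
`U_i := u_i T_{i+1} ⋯ T_n` and `V_i := v_i`, the endomorphism
`1 - V U = 1 - ∑ᵢ v_i u_i T_{i+1} ⋯ T_n` of `Ψ` equals `T_1 T_2 ⋯ T_n`, and in particular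
is invertible; hence `(⊕ᵢ Φ_i, Ψ, V, U)` is again a valid quiver datum. -/
theorem stmt_10 (u : ∀ i, Ψ →ₗ[k] Φ i) (v : ∀ i, Φ i →ₗ[k] Ψ)
    (T : Fin n → Module.End k Ψ) (hT : ∀ i, T i = 1 - v i ∘ₗ u i)
    (hTinv : ∀ i, IsUnit (T i)) :
    (1 : Module.End k Ψ) - ∑ i, (v i ∘ₗ u i) * orderedProd T (Finset.Ioi i) =
        orderedProd T Finset.univ ∧
      IsUnit ((1 : Module.End k Ψ) - ∑ i, (v i ∘ₗ u i) * orderedProd T (Finset.Ioi i)) := by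
  have key := orderedProd_key T Finset.univ
  have h1 : (1 : Module.End k Ψ) - ∑ i, (v i ∘ₗ u i) * orderedProd T (Finset.Ioi i) =
      orderedProd T Finset.univ := by
    rw [key]
    congr 1
    refine Finset.sum_congr rfl fun i _ => ?_
    rw [hT i, Finset.univ_inter, sub_sub_cancel]
  refine ⟨h1, ?_⟩
  rw [h1]
  exact List.prod_isUnit fun x hx => by
    obtain ⟨i, _, rfl⟩ := List.mem_map.1 hx
    exact hTinv i
end
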